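/- (Thomas–Fermi energy of the Bohr atom.) Let q ∈ ℕ, γ_TF = (6π²/q)^{2/3}/2, and N, Z > 0. Then the infimum E^TF_Bohr(N,Z) = inf{ ∫_{ℝ³} ((3/5)γ_TF ρ(x)^{5/3} − (Z/|x|)ρ(x)) dx : ρ ≥ 0, ρ ∈ L^{5/3}(ℝ³), ∫ρ = N } equals −(3/γ_TF)(π²/4)^{2/3} Z² N^{1/3}. Moreover there is a unique minimizer ρ^TF_Bohr, and it satisfies γ_TF ρ^TF_Bohr(x)^{2/3} = (Z/|x| − μ)₊ almost everywhere with μ = (π²/4)^{2/3} γ_TF^{-1} Z² N^{-2/3}. -/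

import Mathlib

open MeasureTheory Real Filter
open scoped ENNReal

noncomputable section

/-- Euclidean space `ℝ³`. -/
abbrev E3 := EuclideanSpace ℝ (Fin 3)

/-- The Thomas–Fermi constant `γ_TF = (6π²/q)^{2/3}/2` for `q` spin states. -/
def gammaTF (q : ℕ) : ℝ := (6 * Real.pi ^ 2 / q) ^ ((2 : ℝ) / 3) / 2

/-- The Thomas–Fermi functional of the Bohr atom (single nucleus of charge `Z`,
no electron–electron repulsion): `𝓔^TF_{Z,Bohr}(ρ) = ∫ ((3/5)γ_TF ρ^{5/3} − (Z/|x|)ρ)`. -/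
def bohrFun (q : ℕ) (Z : ℝ) (ρ : E3 → ℝ) : ℝ :=
  ∫ x : E3, ((3 / 5) * gammaTF q * ρ x ^ ((5 : ℝ) / 3) - Z / ‖x‖ * ρ x)

/-- Admissible densities for the Bohr atom with particle number `N`:
`ρ ≥ 0`, `ρ ∈ L^{5/3}(ℝ³)`, `∫ρ = N`. -/
def InBohr (N : ℝ) (ρ : E3 → ℝ) : Prop :=
  (∀ x, 0 ≤ ρ x) ∧ MemLp ρ (5 / 3 : ℝ≥0∞) volume ∧ (∫ x : E3, ρ x) = N

/-!
Without electron–electron repulsion the functional is local, so it can be minimized pointwise.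
Adding the Lagrange term `μ ∫ ρ`, Young's inequality with exponents `5/3` and `5/2` gives
`(3/5) γ a^{5/3} − (Z/|x|) a ≥ −(2/5) γ ((Z/|x| − μ)₊/γ)^{5/2} − μ a` for every `a ≥ 0`, with
equality exactly at `a = ((Z/|x| − μ)₊/γ)^{3/2}`. Integrating over densities of mass `N` bounds the
energy from below by a constant, attained only by that profile. The integrals of the powers of
`(Z/|x| − μ)₊` are Beta integrals in polar coordinates; they fix `μ` through the mass constraint
and show that the constant is `−3μN`.
-/

open Set

section LocalEnergy

def tfLocalEnergy (γ t a : ℝ) : ℝ := 3 / 5 * γ * a ^ ((5 : ℝ) / 3) - t * a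

def tfMinLocalEnergy (γ t : ℝ) : ℝ := -(2 / 5 * γ * (max t 0 / γ) ^ ((5 : ℝ) / 2))

variable {γ a : ℝ}

-- Both summands are nonnegative: the first by Young's inequality, the second because `t ≤ t₊`.
lemma tfLocalEnergy_sub_tfMinLocalEnergy (hγ : 0 < γ) (t a : ℝ) :
    tfLocalEnergy γ t a - tfMinLocalEnergy γ t =
      γ * (a ^ ((5 : ℝ) / 3) / (5 / 3) + (max t 0 / γ) ^ ((5 : ℝ) / 2) / (5 / 2)
        - a * (max t 0 / γ)) + (max t 0 - t) * a := by
  unfold tfLocalEnergy tfMinLocalEnergy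
  field_simp
  ring

lemma tfLocalEnergy_eq_sub (γ t μ a : ℝ) :
    tfLocalEnergy γ t a = tfLocalEnergy γ (t - μ) a - μ * a := by
  unfold tfLocalEnergy
  ring

lemma holderConjugate_five_thirds_five_halves : Real.HolderConjugate (5 / 3) (5 / 2) :=
  Real.holderConjugate_iff.2 ⟨by norm_num, by norm_num⟩

lemma tfMinLocalEnergy_le_tfLocalEnergy (hγ : 0 < γ) (ha : 0 ≤ a) (t : ℝ) :
    tfMinLocalEnergy γ t ≤ tfLocalEnergy γ t a := by
  have hs : 0 ≤ max t 0 / γ := div_nonneg (le_max_right t 0) hγ.le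
  have hyoung := young_inequality_of_nonneg ha hs holderConjugate_five_thirds_five_halves
  have hsplit := tfLocalEnergy_sub_tfMinLocalEnergy hγ t a
  have := mul_nonneg hγ.le (sub_nonneg.2 hyoung)
  have := mul_nonneg (sub_nonneg.2 (le_max_left t 0)) ha
  linarith

lemma rpow_five_thirds_eq_rpow_five_halves_iff {a s : ℝ} (ha : 0 ≤ a) (hs : 0 ≤ s) :
    a ^ ((5 : ℝ) / 3) = s ^ ((5 : ℝ) / 2) ↔ a = s ^ ((3 : ℝ) / 2) := by
  rw [show (5 : ℝ) / 2 = 3 / 2 * (5 / 3) by norm_num, rpow_mul hs]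
  exact rpow_left_inj ha (rpow_nonneg hs _) (by norm_num)

lemma tfLocalEnergy_eq_tfMinLocalEnergy_iff (hγ : 0 < γ) (ha : 0 ≤ a) (t : ℝ) :
    tfLocalEnergy γ t a = tfMinLocalEnergy γ t ↔ a = (max t 0 / γ) ^ ((3 : ℝ) / 2) := by
  set s := max t 0 / γ
  have hs : 0 ≤ s := div_nonneg (le_max_right t 0) hγ.le
  have hyoung := young_inequality_of_nonneg ha hs holderConjugate_five_thirds_five_halves
  have hyoung_eq := young_inequality_eq_iff_of_nonneg ha hs holderConjugate_five_thirds_five_halves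
  rw [rpow_five_thirds_eq_rpow_five_halves_iff ha hs] at hyoung_eq
  have hsplit := tfLocalEnergy_sub_tfMinLocalEnergy hγ t a
  have hshift := mul_nonneg (sub_nonneg.2 (le_max_left t 0)) ha
  constructor
  · intro h
    refine hyoung_eq.1 ?_
    nlinarith [mul_nonneg hγ.le (sub_nonneg.2 hyoung)]
  · intro h
    -- for `t < 0` the minimizer vanishes, so the shift term is zero in both cases
    have hshift0 : (max t 0 - t) * a = 0 := by
      rcases le_total 0 t with ht | ht
      · simp [max_eq_left ht]
      · simp [h, s, max_eq_right ht, zero_rpow (by norm_num : (3 : ℝ) / 2 ≠ 0)]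
    rw [← sub_eq_zero, hsplit, hshift0, ← hyoung_eq.2 h]
    ring

end LocalEnergy

section IntegralComparison

variable {α : Type*} [MeasurableSpace α] {ν : Measure α} {f g : α → ℝ}

lemma integral_le_integral_of_le_of_integral_nonpos (hg : Integrable g ν) (hgf : g ≤ f)
    (hg0 : ∫ x, g x ∂ν ≤ 0) : ∫ x, g x ∂ν ≤ ∫ x, f x ∂ν := by
  by_cases hf : Integrable f ν
  · exact integral_mono hg hf hgf
  · rwa [integral_undef hf]

lemma ae_eq_of_le_of_integral_eq_of_integral_neg (hg : Integrable g ν) (hgf : g ≤ f)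
    (hg0 : ∫ x, g x ∂ν < 0) (h : ∫ x, f x ∂ν = ∫ x, g x ∂ν) : f =ᵐ[ν] g := by
  have hf : Integrable f ν := Integrable.of_integral_ne_zero (h ▸ hg0.ne)
  exact ((integral_eq_iff_of_ae_le hg hf (ae_of_all _ hgf)).1 h.symm).symm

end IntegralComparison

lemma integral_rpow_mul_one_sub_rpow {a b : ℝ} (ha : 0 < a) (hb : 0 < b) :
    ∫ s in (0 : ℝ)..1, s ^ (a - 1) * (1 - s) ^ (b - 1) = Gamma a * Gamma b / Gamma (a + b) := by
  have hbeta : Complex.betaIntegral a b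
      = ↑(∫ s in (0 : ℝ)..1, s ^ (a - 1) * (1 - s) ^ (b - 1)) := by
    rw [Complex.betaIntegral, ← intervalIntegral.integral_ofReal]
    refine intervalIntegral.integral_congr fun s hs => ?_
    rw [uIcc_of_le zero_le_one] at hs
    push_cast
    rw [Complex.ofReal_cpow hs.1, Complex.ofReal_cpow (sub_nonneg.2 hs.2)]
    push_cast
    ring_nf
  have h := Complex.Gamma_mul_Gamma_eq_betaIntegral (s := a) (t := b) (by simpa) (by simpa)
  rw [hbeta, ← Complex.ofReal_add, Complex.Gamma_ofReal, Complex.Gamma_ofReal,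
    Complex.Gamma_ofReal] at h
  rw [eq_div_iff (Gamma_pos_of_pos (add_pos ha hb)).ne', mul_comm]
  exact_mod_cast h.symm

lemma Gamma_three_halves : Gamma (3 / 2) = √π / 2 := by
  rw [show (3 : ℝ) / 2 = 1 / 2 + 1 by norm_num, Gamma_add_one (by norm_num), Gamma_one_half_eq]
  ring

lemma Gamma_five_halves : Gamma (5 / 2) = 3 * √π / 4 := by
  rw [show (5 : ℝ) / 2 = 3 / 2 + 1 by norm_num, Gamma_add_one (by norm_num), Gamma_three_halves]
  ring

lemma Gamma_seven_halves : Gamma (7 / 2) = 15 * √π / 8 := by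
  rw [show (7 : ℝ) / 2 = 5 / 2 + 1 by norm_num, Gamma_add_one (by norm_num), Gamma_five_halves]
  ring

lemma integral_fun_norm_euclideanSpace_fin_three (f : ℝ → ℝ) :
    ∫ x : E3, f ‖x‖ = 4 * π * ∫ y in Ioi 0, y ^ 2 * f y := by
  rw [integral_fun_norm_addHaar volume f, finrank_euclideanSpace_fin, measureReal_def,
    EuclideanSpace.volume_ball_fin_three, ENNReal.ofReal_one, one_pow, one_mul,
    ENNReal.toReal_ofReal (by positivity)]
  simp only [nsmul_eq_mul, smul_eq_mul, Nat.add_one_sub_one, Nat.cast_ofNat]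
  ring

lemma integrable_fun_norm_euclideanSpace_fin_three_iff {f : ℝ → ℝ} :
    Integrable (fun x : E3 => f ‖x‖) ↔ IntegrableOn (fun y => y ^ 2 * f y) (Ioi 0) := by
  rw [integrable_fun_norm_addHaar volume, finrank_euclideanSpace_fin]
  rfl

section Radial

variable {Z μ p : ℝ}

lemma sq_mul_max_div_sub_rpow_eqOn (hμ : 0 < μ) (hp : 0 < p) :
    EqOn (fun y => y ^ 2 * max (Z / y - μ) 0 ^ p)
      ((Ioc 0 (Z / μ)).indicator fun y => y ^ (2 - p) * (Z - μ * y) ^ p) (Ioi 0) := by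
  intro y hy
  simp only [mem_Ioi] at hy
  dsimp only
  by_cases hyR : y ≤ Z / μ
  · have hZy : 0 ≤ Z - μ * y := by rw [le_div_iff₀ hμ] at hyR; linarith
    have hsub : Z / y - μ = (Z - μ * y) / y := by field_simp
    rw [indicator_of_mem (show y ∈ Ioc 0 (Z / μ) from ⟨hy, hyR⟩), hsub,
      max_eq_left (div_nonneg hZy hy.le), div_rpow hZy hy.le, rpow_sub hy, rpow_two]
    ring
  · have hneg : Z / y - μ ≤ 0 := by
      rw [not_le, div_lt_iff₀ hμ] at hyR
      rw [sub_nonpos, div_le_iff₀ hy]; linarith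
    rw [indicator_of_notMem (fun h => hyR h.2), max_eq_right hneg, zero_rpow hp.ne', mul_zero]

lemma intervalIntegrable_rpow_mul_sub_rpow (hp : 0 < p) (hp3 : p < 3) (R : ℝ) :
    IntervalIntegrable (fun y => y ^ (2 - p) * (Z - μ * y) ^ p) volume 0 R :=
  (intervalIntegral.intervalIntegrable_rpow' (by linarith)).mul_continuousOn
    ((continuous_const.sub (continuous_const.mul continuous_id)).continuousOn.rpow_const
      fun _ _ => Or.inr hp.le)

lemma integral_rpow_mul_sub_rpow (hZ : 0 < Z) (hμ : 0 < μ) (hp : 0 < p) (hp3 : p < 3) :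
    ∫ y in 0..Z / μ, y ^ (2 - p) * (Z - μ * y) ^ p
      = Z ^ 3 / μ ^ (3 - p) * (Gamma (3 - p) * Gamma (p + 1) / 6) := by
  set R := Z / μ with hR
  have hR0 : 0 < R := div_pos hZ hμ
  have hscale : ∀ s ∈ uIcc (0 : ℝ) 1, (R * s) ^ (2 - p) * (Z - μ * (R * s)) ^ p
      = R ^ (2 - p) * Z ^ p * (s ^ (3 - p - 1) * (1 - s) ^ (p + 1 - 1)) := by
    intro s hs
    rw [uIcc_of_le zero_le_one] at hs
    rw [show Z - μ * (R * s) = Z * (1 - s) by rw [hR]; field_simp,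
      mul_rpow hR0.le hs.1, mul_rpow hZ.le (sub_nonneg.2 hs.2)]
    ring_nf
  have hconst : R * (R ^ (2 - p) * Z ^ p) = Z ^ 3 / μ ^ (3 - p) := by
    rw [← mul_assoc, ← rpow_one_add' hR0.le (by linarith), show 1 + (2 - p) = 3 - p by ring, hR,
      div_rpow hZ.le hμ.le, div_mul_eq_mul_div, ← rpow_add hZ,
      show 3 - p + p = (3 : ℕ) by push_cast; ring, rpow_natCast]
  calc ∫ y in 0..R, y ^ (2 - p) * (Z - μ * y) ^ p
      = R * ∫ s in 0..1, (R * s) ^ (2 - p) * (Z - μ * (R * s)) ^ p := by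
        rw [intervalIntegral.integral_comp_mul_left (fun y => y ^ (2 - p) * (Z - μ * y) ^ p)
          hR0.ne', mul_zero, mul_one, smul_eq_mul, mul_inv_cancel_left₀ hR0.ne']
    _ = R * (R ^ (2 - p) * Z ^ p) * (Gamma (3 - p) * Gamma (p + 1) / Gamma 4) := by
        rw [intervalIntegral.integral_congr hscale, intervalIntegral.integral_const_mul,
          integral_rpow_mul_one_sub_rpow (by linarith) (by linarith),
          show 3 - p + (p + 1) = 4 by ring]
        ring
    _ = Z ^ 3 / μ ^ (3 - p) * (Gamma (3 - p) * Gamma (p + 1) / 6) := by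
        rw [hconst, Gamma_ofNat_eq_factorial 3]
        norm_num [Nat.factorial]

lemma integrableOn_Ioi_sq_mul_max_div_sub_rpow (hμ : 0 < μ) (hp : 0 < p) (hp3 : p < 3) :
    IntegrableOn (fun y => y ^ 2 * max (Z / y - μ) 0 ^ p) (Ioi 0) :=
  ((intervalIntegrable_rpow_mul_sub_rpow hp hp3 (Z / μ)).1.integrable_indicator
    measurableSet_Ioc).integrableOn.congr_fun (sq_mul_max_div_sub_rpow_eqOn hμ hp).symm
    measurableSet_Ioi

lemma integral_Ioi_sq_mul_max_div_sub_rpow (hZ : 0 < Z) (hμ : 0 < μ) (hp : 0 < p) (hp3 : p < 3) :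
    ∫ y in Ioi 0, y ^ 2 * max (Z / y - μ) 0 ^ p
      = Z ^ 3 / μ ^ (3 - p) * (Gamma (3 - p) * Gamma (p + 1) / 6) := by
  rw [setIntegral_congr_fun measurableSet_Ioi (sq_mul_max_div_sub_rpow_eqOn hμ hp),
    setIntegral_indicator measurableSet_Ioc, inter_eq_right.2 Ioc_subset_Ioi_self,
    ← intervalIntegral.integral_of_le (div_pos hZ hμ).le, integral_rpow_mul_sub_rpow hZ hμ hp hp3]

theorem integrable_max_div_norm_sub_rpow (hμ : 0 < μ) (hp : 0 < p) (hp3 : p < 3) :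
    Integrable fun x : E3 => max (Z / ‖x‖ - μ) 0 ^ p :=
  integrable_fun_norm_euclideanSpace_fin_three_iff.2
    (integrableOn_Ioi_sq_mul_max_div_sub_rpow hμ hp hp3)

theorem integral_max_div_norm_sub_rpow (hZ : 0 < Z) (hμ : 0 < μ) (hp : 0 < p) (hp3 : p < 3) :
    ∫ x : E3, max (Z / ‖x‖ - μ) 0 ^ p
      = 2 * π / 3 * Gamma (3 - p) * Gamma (p + 1) * Z ^ 3 / μ ^ (3 - p) := by
  rw [integral_fun_norm_euclideanSpace_fin_three fun y => max (Z / y - μ) 0 ^ p,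
    integral_Ioi_sq_mul_max_div_sub_rpow hZ hμ hp hp3]
  ring

end Radial

def tfBohrDensity (γ Z μ : ℝ) (x : E3) : ℝ := (max (Z / ‖x‖ - μ) 0 / γ) ^ ((3 : ℝ) / 2)

section BohrDensity

variable {γ Z μ : ℝ}

lemma tfBohrDensity_nonneg (hγ : 0 ≤ γ) (x : E3) : 0 ≤ tfBohrDensity γ Z μ x :=
  rpow_nonneg (div_nonneg (le_max_right _ _) hγ) _

lemma gamma_mul_tfBohrDensity_rpow (hγ : 0 < γ) (x : E3) :
    γ * tfBohrDensity γ Z μ x ^ ((2 : ℝ) / 3) = max (Z / ‖x‖ - μ) 0 := by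
  rw [tfBohrDensity, ← rpow_mul (div_nonneg (le_max_right _ _) hγ.le)]
  norm_num
  field_simp

lemma integrable_max_div_norm_sub_div_rpow (hγ : 0 < γ) (hμ : 0 < μ) {p : ℝ} (hp : 0 < p)
    (hp3 : p < 3) :
    Integrable fun x : E3 => (max (Z / ‖x‖ - μ) 0 / γ) ^ p := by
  simp_rw [div_rpow (le_max_right _ 0) hγ.le]
  exact (integrable_max_div_norm_sub_rpow hμ hp hp3).div_const _

lemma integral_max_div_norm_sub_div_rpow (hγ : 0 < γ) (hZ : 0 < Z) (hμ : 0 < μ) {p : ℝ}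
    (hp : 0 < p) (hp3 : p < 3) :
    ∫ x : E3, (max (Z / ‖x‖ - μ) 0 / γ) ^ p
      = 2 * π / 3 * Gamma (3 - p) * Gamma (p + 1) * Z ^ 3 / μ ^ (3 - p) / γ ^ p := by
  simp_rw [div_rpow (le_max_right _ 0) hγ.le]
  rw [integral_div, integral_max_div_norm_sub_rpow hZ hμ hp hp3]

lemma integrable_tfBohrDensity (hγ : 0 < γ) (hμ : 0 < μ) : Integrable (tfBohrDensity γ Z μ) :=
  integrable_max_div_norm_sub_div_rpow hγ hμ (by norm_num) (by norm_num)

lemma integral_tfBohrDensity (hγ : 0 < γ) (hZ : 0 < Z) (hμ : 0 < μ) :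
    ∫ x, tfBohrDensity γ Z μ x = π ^ 2 / 4 * Z ^ 3 / (γ * μ) ^ ((3 : ℝ) / 2) := by
  simp only [tfBohrDensity]
  rw [integral_max_div_norm_sub_div_rpow hγ hZ hμ (by norm_num) (by norm_num),
    show (3 : ℝ) - 3 / 2 = 3 / 2 by norm_num, show (3 : ℝ) / 2 + 1 = 5 / 2 by norm_num,
    Gamma_three_halves, Gamma_five_halves, mul_rpow hγ.le hμ.le]
  field_simp
  rw [sq_sqrt pi_pos.le]

lemma integral_tfMinLocalEnergy (hγ : 0 < γ) (hZ : 0 < Z) (hμ : 0 < μ) :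
    ∫ x : E3, tfMinLocalEnergy γ (Z / ‖x‖ - μ) = -(2 * μ * ∫ x, tfBohrDensity γ Z μ x) := by
  have hγ52 : γ ^ ((5 : ℝ) / 2) = γ * γ ^ ((3 : ℝ) / 2) := by
    rw [← rpow_one_add' hγ.le (by norm_num)]
    norm_num
  have hμ32 : μ ^ ((3 : ℝ) / 2) = μ * μ ^ ((1 : ℝ) / 2) := by
    rw [← rpow_one_add' hμ.le (by norm_num)]
    norm_num
  simp only [tfMinLocalEnergy]
  rw [integral_neg, integral_const_mul, integral_tfBohrDensity hγ hZ hμ,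
    integral_max_div_norm_sub_div_rpow hγ hZ hμ (by norm_num) (by norm_num),
    show (3 : ℝ) - 5 / 2 = 1 / 2 by norm_num, show (5 : ℝ) / 2 + 1 = 7 / 2 by norm_num,
    Gamma_one_half_eq, Gamma_seven_halves, mul_rpow hγ.le hμ.le, hγ52, hμ32]
  field_simp
  rw [sq_sqrt pi_pos.le]
  ring

lemma memLp_tfBohrDensity (hγ : 0 < γ) (hμ : 0 < μ) :
    MemLp (tfBohrDensity γ Z μ) (5 / 3) volume := by
  refine (integrable_norm_rpow_iff (integrable_tfBohrDensity hγ hμ).aestronglyMeasurable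
    (by norm_num) (ENNReal.div_lt_top (by simp) (by simp)).ne).1 ?_
  convert integrable_max_div_norm_sub_div_rpow (Z := Z) hγ hμ (p := 5 / 2) (by norm_num)
    (by norm_num) using 2 with x
  rw [norm_of_nonneg (tfBohrDensity_nonneg hγ.le x), tfBohrDensity,
    ← rpow_mul (div_nonneg (le_max_right _ _) hγ.le)]
  norm_num

lemma integrable_tfMinLocalEnergy (hγ : 0 < γ) (hμ : 0 < μ) :
    Integrable fun x : E3 => tfMinLocalEnergy γ (Z / ‖x‖ - μ) :=
  ((integrable_max_div_norm_sub_div_rpow hγ hμ (by norm_num) (by norm_num)).const_mul _).neg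

lemma integral_tfBohrDensity_pos (hγ : 0 < γ) (hZ : 0 < Z) (hμ : 0 < μ) :
    0 < ∫ x, tfBohrDensity γ Z μ x := by
  rw [integral_tfBohrDensity hγ hZ hμ]
  positivity

lemma tfMinLocalEnergy_sub_mul_le (hγ : 0 < γ) {a : ℝ} (ha : 0 ≤ a) (x : E3) :
    tfMinLocalEnergy γ (Z / ‖x‖ - μ) - μ * a ≤ tfLocalEnergy γ (Z / ‖x‖) a := by
  rw [tfLocalEnergy_eq_sub γ _ μ, sub_le_sub_iff_right]
  exact tfMinLocalEnergy_le_tfLocalEnergy hγ ha _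

lemma tfLocalEnergy_eq_tfMinLocalEnergy_sub_mul_iff (hγ : 0 < γ) {a : ℝ} (ha : 0 ≤ a) (x : E3) :
    tfLocalEnergy γ (Z / ‖x‖) a = tfMinLocalEnergy γ (Z / ‖x‖ - μ) - μ * a ↔
      a = tfBohrDensity γ Z μ x := by
  rw [tfLocalEnergy_eq_sub γ _ μ, sub_left_inj]
  exact tfLocalEnergy_eq_tfMinLocalEnergy_iff hγ ha _

end BohrDensity

lemma gammaTF_pos {q : ℕ} (hq : 0 < q) : 0 < gammaTF q := by
  have : (0 : ℝ) < q := Nat.cast_pos.2 hq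
  unfold gammaTF
  positivity

lemma InBohr.integrable {N : ℝ} {ρ : E3 → ℝ} (hρ : InBohr N ρ) (hN : N ≠ 0) : Integrable ρ :=
  Integrable.of_integral_ne_zero (hρ.2.2 ▸ hN)

section BohrVariational

variable {q : ℕ} {Z μ N : ℝ} {ρ : E3 → ℝ}

lemma bohrFun_eq_integral_tfLocalEnergy (q : ℕ) (Z : ℝ) (ρ : E3 → ℝ) :
    bohrFun q Z ρ = ∫ x, tfLocalEnergy (gammaTF q) (Z / ‖x‖) (ρ x) :=
  rfl

lemma integral_tfMinLocalEnergy_sub_mul (hq : 0 < q) (hZ : 0 < Z) (hμ : 0 < μ)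
    (hN : ∫ x, tfBohrDensity (gammaTF q) Z μ x = N) (hρ : InBohr N ρ) :
    Integrable (fun x : E3 => tfMinLocalEnergy (gammaTF q) (Z / ‖x‖ - μ) - μ * ρ x) ∧
      ∫ x : E3, (tfMinLocalEnergy (gammaTF q) (Z / ‖x‖ - μ) - μ * ρ x) = -(3 * μ * N) := by
  have hγ := gammaTF_pos hq
  have hρi := hρ.integrable (hN ▸ integral_tfBohrDensity_pos hγ hZ hμ).ne'
  refine ⟨(integrable_tfMinLocalEnergy hγ hμ).sub (hρi.const_mul μ), ?_⟩
  rw [integral_sub (integrable_tfMinLocalEnergy hγ hμ) (hρi.const_mul μ), integral_const_mul,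
    integral_tfMinLocalEnergy hγ hZ hμ, hN, hρ.2.2]
  ring

lemma inBohr_tfBohrDensity (hq : 0 < q) (hμ : 0 < μ)
    (hN : ∫ x, tfBohrDensity (gammaTF q) Z μ x = N) : InBohr N (tfBohrDensity (gammaTF q) Z μ) :=
  ⟨tfBohrDensity_nonneg (gammaTF_pos hq).le, memLp_tfBohrDensity (gammaTF_pos hq) hμ, hN⟩

lemma bohrFun_tfBohrDensity (hq : 0 < q) (hZ : 0 < Z) (hμ : 0 < μ)
    (hN : ∫ x, tfBohrDensity (gammaTF q) Z μ x = N) :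
    bohrFun q Z (tfBohrDensity (gammaTF q) Z μ) = -(3 * μ * N) := by
  have hγ := gammaTF_pos hq
  rw [bohrFun_eq_integral_tfLocalEnergy, ← (integral_tfMinLocalEnergy_sub_mul hq hZ hμ hN
    (inBohr_tfBohrDensity hq hμ hN)).2]
  exact integral_congr_ae (ae_of_all _ fun x =>
    (tfLocalEnergy_eq_tfMinLocalEnergy_sub_mul_iff hγ (tfBohrDensity_nonneg hγ.le x) x).2 rfl)

lemma le_bohrFun (hq : 0 < q) (hZ : 0 < Z) (hμ : 0 < μ)
    (hN : ∫ x, tfBohrDensity (gammaTF q) Z μ x = N) (hρ : InBohr N ρ) :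
    -(3 * μ * N) ≤ bohrFun q Z ρ := by
  obtain ⟨hint, hval⟩ := integral_tfMinLocalEnergy_sub_mul hq hZ hμ hN hρ
  have hN0 : 0 < N := hN ▸ integral_tfBohrDensity_pos (gammaTF_pos hq) hZ hμ
  rw [← hval]
  exact integral_le_integral_of_le_of_integral_nonpos hint
    (fun x => tfMinLocalEnergy_sub_mul_le (gammaTF_pos hq) (hρ.1 x) x)
    (by rw [hval, neg_nonpos]; positivity)

lemma ae_eq_tfBohrDensity_of_bohrFun_eq (hq : 0 < q) (hZ : 0 < Z) (hμ : 0 < μ)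
    (hN : ∫ x, tfBohrDensity (gammaTF q) Z μ x = N) (hρ : InBohr N ρ)
    (hmin : bohrFun q Z ρ = -(3 * μ * N)) : ρ =ᵐ[volume] tfBohrDensity (gammaTF q) Z μ := by
  have hγ := gammaTF_pos hq
  obtain ⟨hint, hval⟩ := integral_tfMinLocalEnergy_sub_mul hq hZ hμ hN hρ
  have hN0 : 0 < N := hN ▸ integral_tfBohrDensity_pos hγ hZ hμ
  have hae := ae_eq_of_le_of_integral_eq_of_integral_neg hint
    (fun x => tfMinLocalEnergy_sub_mul_le hγ (hρ.1 x) x) (by rw [hval, neg_lt_zero]; positivity)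
    (hmin.trans hval.symm)
  filter_upwards [hae] with x hx
  exact (tfLocalEnergy_eq_tfMinLocalEnergy_sub_mul_iff hγ (hρ.1 x) x).1 hx

theorem isLeast_bohrFun (hq : 0 < q) (hZ : 0 < Z) (hμ : 0 < μ)
    (hN : ∫ x, tfBohrDensity (gammaTF q) Z μ x = N) :
    IsLeast {e | ∃ ρ : E3 → ℝ, InBohr N ρ ∧ e = bohrFun q Z ρ} (-(3 * μ * N)) :=
  ⟨⟨_, inBohr_tfBohrDensity hq hμ hN, (bohrFun_tfBohrDensity hq hZ hμ hN).symm⟩,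
    by rintro _ ⟨ρ, hρ, rfl⟩; exact le_bohrFun hq hZ hμ hN hρ⟩

end BohrVariational

section ChemicalPotential

def bohrChemicalPotential (γ Z N : ℝ) : ℝ :=
  (π ^ 2 / 4) ^ ((2 : ℝ) / 3) / γ * Z ^ 2 / N ^ ((2 : ℝ) / 3)

variable {γ Z N : ℝ}

lemma bohrChemicalPotential_pos (hγ : 0 < γ) (hZ : 0 < Z) (hN : 0 < N) :
    0 < bohrChemicalPotential γ Z N := by
  unfold bohrChemicalPotential
  positivity

lemma gamma_mul_bohrChemicalPotential (hγ : 0 < γ) (hZ : 0 < Z) (hN : 0 < N) :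
    γ * bohrChemicalPotential γ Z N = (π ^ 2 / 4 * Z ^ 3 / N) ^ ((2 : ℝ) / 3) := by
  have hZ3 : (Z ^ 3) ^ ((2 : ℝ) / 3) = Z ^ 2 := by
    rw [← rpow_natCast, ← rpow_mul hZ.le]
    norm_num
  rw [bohrChemicalPotential, div_rpow (by positivity) hN.le,
    mul_rpow (by positivity) (by positivity), hZ3]
  field_simp

lemma integral_tfBohrDensity_bohrChemicalPotential (hγ : 0 < γ) (hZ : 0 < Z) (hN : 0 < N) :
    ∫ x, tfBohrDensity γ Z (bohrChemicalPotential γ Z N) x = N := by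
  rw [integral_tfBohrDensity hγ hZ (bohrChemicalPotential_pos hγ hZ hN),
    gamma_mul_bohrChemicalPotential hγ hZ hN, ← rpow_mul (by positivity)]
  norm_num
  field_simp

lemma bohrChemicalPotential_mul (hN : 0 < N) :
    bohrChemicalPotential γ Z N * N
      = (π ^ 2 / 4) ^ ((2 : ℝ) / 3) / γ * Z ^ 2 * N ^ ((1 : ℝ) / 3) := by
  rw [bohrChemicalPotential, show (1 : ℝ) / 3 = 1 - 2 / 3 by norm_num, rpow_sub hN, rpow_one]
  ring

end ChemicalPotential

/-- The Thomas–Fermi energy of the Bohr atom equals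
`−(3/γ_TF)(π²/4)^{2/3} Z² N^{1/3}`; there is a unique minimizer, and it satisfies the
Euler–Lagrange equation `γ_TF ρ^{2/3} = (Z/|x| − μ)₊` with
`μ = (π²/4)^{2/3} γ_TF^{−1} Z² N^{−2/3}`. -/
theorem tf_bohr_atom (q : ℕ) (hq : 0 < q) (N Z : ℝ) (hN : 0 < N) (hZ : 0 < Z) :
    sInf {e | ∃ ρ : E3 → ℝ, InBohr N ρ ∧ e = bohrFun q Z ρ}
      = -(3 / gammaTF q) * (Real.pi ^ 2 / 4) ^ ((2 : ℝ) / 3) * Z ^ 2 * N ^ ((1 : ℝ) / 3) ∧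
    ∃ ρB : E3 → ℝ, InBohr N ρB ∧
      bohrFun q Z ρB = sInf {e | ∃ ρ : E3 → ℝ, InBohr N ρ ∧ e = bohrFun q Z ρ} ∧
      (∀ ρ : E3 → ℝ, InBohr N ρ →
        bohrFun q Z ρ = sInf {e | ∃ ρ' : E3 → ℝ, InBohr N ρ' ∧ e = bohrFun q Z ρ'} →
        ρ =ᵐ[volume] ρB) ∧
      (∀ᵐ x : E3 ∂volume,
        gammaTF q * ρB x ^ ((2 : ℝ) / 3)
          = max (Z / ‖x‖
              - (Real.pi ^ 2 / 4) ^ ((2 : ℝ) / 3) / gammaTF q * Z ^ 2 / N ^ ((2 : ℝ) / 3))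
              0) := by
  have hγ := gammaTF_pos hq
  have hμ := bohrChemicalPotential_pos hγ hZ hN
  have hmass := integral_tfBohrDensity_bohrChemicalPotential hγ hZ hN
  rw [(isLeast_bohrFun hq hZ hμ hmass).csInf_eq]
  refine ⟨?_, _, inBohr_tfBohrDensity hq hμ hmass, bohrFun_tfBohrDensity hq hZ hμ hmass,
    fun ρ hρ hmin => ae_eq_tfBohrDensity_of_bohrFun_eq hq hZ hμ hmass hρ hmin,
    ae_of_all _ fun x => gamma_mul_tfBohrDensity_rpow hγ x⟩
  rw [mul_assoc, bohrChemicalPotential_mul hN]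
  ring
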